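/- arXiv:1301.0083 — 8 statements merged into one kernel-verified Lean document; each statement's English description precedes it below -/
import Mathlib

section
/- Fix n ∈ ℕ, integers a₀, …, aₙ, and s ∈ ℂ with s ≠ i for every i ∈ {0, …, n}. Then, as the real variable q tends to 1 from the right (q → 1⁺ with q > 1), the product ∏_{i=0}^{n} ((1 − q^{i−s})/(q − 1))^{a_i} tends to ∏_{i=0}^{n} (s − i)^{a_i}. (This identifies the limit q → 1 of (q−1)^{N(1)} · ζ(X_{F_q}, s) for a scheme with counting polynomial N(q) = Σ a_i q^i, giving Soulé's zeta function ζ_X(s) = ∏ (s−i)^{a_i} over F₁.) -/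
open Filter Topology

lemma hasDerivAt_ofReal_cpow_const_at_one (w : ℂ) :
    HasDerivAt (fun q : ℝ => (q : ℂ) ^ w) w 1 := by
  simpa using ((hasDerivAt_id (1 : ℂ)).cpow_const (by simp)).comp_ofReal

/-- `(1 - q ^ w) / (q - 1)` is minus the difference quotient of `q ↦ q ^ w` at `1`. -/
lemma tendsto_one_sub_cpow_div_sub_one (w : ℂ) :
    Tendsto (fun q : ℝ => (1 - (q : ℂ) ^ w) / ((q : ℂ) - 1)) (𝓝[≠] 1) (𝓝 (-w)) := by
  refine (hasDerivAt_iff_tendsto_slope.mp (hasDerivAt_ofReal_cpow_const_at_one w)).neg.congr' ?_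
  filter_upwards [self_mem_nhdsWithin] with q hq
  have hq' : (q : ℂ) - 1 ≠ 0 := sub_ne_zero.mpr (by exact_mod_cast hq)
  simp only [slope, vsub_eq_sub, Complex.real_smul, Complex.ofReal_one, Complex.one_cpow]
  push_cast
  field_simp
  ring

/-- Soulé's zeta function over `F₁`: for a counting polynomial
`N(q) = ∑_{i=0}^n aᵢ qⁱ`, the limit as `q → 1⁺` of
`∏_{i=0}^n ((1 - q^{i-s})/(q-1))^{aᵢ}` (which is `(q-1)^{N(1)} ζ(X_{F_q}, s)`)
equals `ζ_X(s) = ∏_{i=0}^n (s - i)^{aᵢ}`, provided `s ≠ i` for `0 ≤ i ≤ n`. -/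
theorem soule_zeta_limit (n : ℕ) (a : ℕ → ℤ) (s : ℂ)
    (hs : ∀ i ∈ Finset.range (n + 1), s ≠ (i : ℂ)) :
    Tendsto
      (fun q : ℝ =>
        ∏ i ∈ Finset.range (n + 1),
          ((1 - (q : ℂ) ^ ((i : ℂ) - s)) / ((q : ℂ) - 1)) ^ a i)
      (nhdsWithin 1 (Set.Ioi 1))
      (nhds (∏ i ∈ Finset.range (n + 1), (s - (i : ℂ)) ^ a i)) := by
  refine tendsto_finsetProd _ fun i hi => ?_
  have hfactor : Tendsto (fun q : ℝ => (1 - (q : ℂ) ^ ((i : ℂ) - s)) / ((q : ℂ) - 1))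
      (𝓝[>] 1) (𝓝 (s - i)) := by
    simpa only [neg_sub] using (tendsto_one_sub_cpow_div_sub_one ((i : ℂ) - s)).mono_left
      (nhdsGT_le_nhdsNE 1)
  exact hfactor.zpow₀ (a i) (Or.inl (sub_ne_zero.mpr (hs i hi)))
end

section
/- Let K be a field with an absolute value v, let A = {a ∈ K : v(a) ≤ 1}, and let I be a multiplicative ideal of A, i.e. a subset I ⊆ A with 0 ∈ I and x·a ∈ I for all x ∈ I and a ∈ A. Then there exists r ∈ [0,1] such that either I = {a ∈ K : v(a) ≤ r} or I = {a ∈ K : v(a) < r}. (This classifies the ideals of the stalk of the compactified arithmetic curve at an (archimedean) place.) -/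
/-- Classification of the ideals of the stalk `O_{X,p} = {a ∈ K : v(a) ≤ 1}` of
the compactified arithmetic curve at a place `v`: every multiplicative ideal
`I` of `A = {a ∈ K : v(a) ≤ 1}` is of the form `{a : v(a) ≤ r}` or
`{a : v(a) < r}` for some `r ∈ [0,1]`. -/
theorem multiplicative_ideal_classification
    {K : Type*} [Field K] (v : AbsoluteValue K ℝ) (I : Set K)
    (hIA : I ⊆ {a : K | v a ≤ 1})
    (h0 : (0 : K) ∈ I)
    (hmul : ∀ x ∈ I, ∀ a : K, v a ≤ 1 → x * a ∈ I) :
    ∃ r : ℝ, 0 ≤ r ∧ r ≤ 1 ∧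
      (I = {a : K | v a ≤ r} ∨ I = {a : K | v a < r}) := by
  have key : ∀ x ∈ I, ∀ y : K, v y ≤ v x → y ∈ I := by
    intro x hx y hy
    by_cases hx0 : x = 0
    · subst hx0
      simp only [map_zero] at hy
      have : v y = 0 := le_antisymm hy (v.nonneg y)
      have : y = 0 := by
        by_contra h
        exact absurd this (ne_of_gt (v.pos h))
      rw [this]; exact h0
    · have hvx : 0 < v x := v.pos hx0
      have : y = x * (y / x) := by field_simp
      rw [this]
      apply hmul x hx
      rw [map_div₀]
      exact div_le_one_of_le₀ hy hvx.le
  set S := v '' I with hS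
  have hSne : S.Nonempty := ⟨v 0, 0, h0, rfl⟩
  have hSbdd : BddAbove S := ⟨1, by rintro _ ⟨x, hx, rfl⟩; exact hIA hx⟩
  set r := sSup S with hr
  have hr0 : 0 ≤ r := (map_zero v) ▸ le_csSup hSbdd ⟨0, h0, rfl⟩
  have hr1 : r ≤ 1 := csSup_le hSne (by rintro _ ⟨x, hx, rfl⟩; exact hIA hx)
  have hub : ∀ x ∈ I, v x ≤ r := fun x hx => le_csSup hSbdd ⟨x, hx, rfl⟩
  refine ⟨r, hr0, hr1, ?_⟩
  by_cases hmem : r ∈ S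
  · left
    obtain ⟨x₀, hx₀, hvx₀⟩ := hmem
    ext a
    constructor
    · intro ha; exact hub a ha
    · intro ha; exact key x₀ hx₀ a (by rw [hvx₀]; exact ha)
  · right
    ext a
    constructor
    · intro ha
      have := hub a ha
      exact lt_of_le_of_ne this fun h => hmem ⟨a, ha, h⟩
    · intro ha
      obtain ⟨s, hs, hsa⟩ := exists_lt_of_lt_csSup hSne ha
      obtain ⟨x, hx, rfl⟩ := hs
      exact key x hx a hsa.le
end

section
/- Let K be a number field, let w be an infinite (archimedean) place of K, regarded as an absolute value K → ℝ, and let A = {a ∈ K : w(a) ≤ 1}. A prime multiplicative ideal of A is a subset I ⊆ A with 0 ∈ I, x·a ∈ I for all x ∈ I and a ∈ A, 1 ∉ I, and such that the complement A ∖ I is closed under multiplication. Then the prime multiplicative ideals of A are exactly the two sets {0} and m = {a ∈ K : w(a) < 1}. -/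
/-- Let `K` be a number field and `w` an infinite (archimedean) place of `K`,
and let `A = {a ∈ K : w(a) ≤ 1}`.  The prime multiplicative ideals of the
monoid `A` — subsets `I ⊆ A` with `0 ∈ I`, closed under multiplication by
elements of `A`, with `1 ∉ I` and whose complement in `A` is multiplicatively
closed — are exactly `{0}` and `m = {a ∈ K : w(a) < 1}`. -/
theorem prime_ideals_of_archimedean_stalk
    {K : Type*} [Field K] [NumberField K] (w : NumberField.InfinitePlace K)
    (I : Set K) :
    (I ⊆ {a : K | w a ≤ 1} ∧
        (0 : K) ∈ I ∧
        (∀ x ∈ I, ∀ a : K, w a ≤ 1 → x * a ∈ I) ∧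
        (1 : K) ∉ I ∧
        (∀ a b : K, w a ≤ 1 → w b ≤ 1 → a ∉ I → b ∉ I → a * b ∉ I)) ↔
      (I = {0} ∨ I = {a : K | w a < 1}) := by
  constructor
  · rintro ⟨hsub, h0, hmul, h1, hprime⟩
    by_cases hI : I = {0}
    · exact Or.inl hI
    right
    -- get a nonzero element of I
    obtain ⟨x, hxI, hx0⟩ : ∃ x ∈ I, x ≠ 0 := by
      by_contra h
      push_neg at h
      apply hI
      ext y
      simp only [Set.mem_singleton_iff]
      exact ⟨fun hy => h y hy, fun hy => hy ▸ h0⟩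
    -- powers of non-elements are non-elements
    have hpow : ∀ b : K, w b ≤ 1 → b ∉ I → ∀ n : ℕ, b ^ (n + 1) ∉ I := by
      intro b hb hbI n
      induction n with
      | zero => simpa using hbI
      | succ n ih =>
        have hbn : w (b ^ (n + 1)) ≤ 1 := by
          rw [map_pow]
          exact pow_le_one₀ (AbsoluteValue.nonneg _ _) hb
        have := hprime _ _ hbn hb ih hbI
        simpa [pow_succ] using this
    ext y
    simp only [Set.mem_setOf_eq]
    constructor
    · intro hyI
      have hy1 : w y ≤ 1 := hsub hyI
      rcases lt_or_eq_of_le hy1 with h | h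
      · exact h
      · exfalso
        have hy0 : y ≠ 0 := by
          intro hy
          rw [hy, map_zero] at h
          norm_num at h
        have : y * y⁻¹ ∈ I := by
          apply hmul y hyI
          rw [map_inv₀, h]
          norm_num
        rw [mul_inv_cancel₀ hy0] at this
        exact h1 this
    · intro hy
      by_cases hy0 : y = 0
      · rwa [hy0]
      by_contra hyI
      have hwx : 0 < w x := by
        have := (AbsoluteValue.pos_iff w.1).2 hx0
        exact this
      obtain ⟨n, hn⟩ := exists_pow_lt_of_lt_one hwx hy
      -- y ^ n ∈ I since x divides it in A
      have hyn : y ^ n ∈ I := by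
        have : w (y ^ n * x⁻¹) ≤ 1 := by
          rw [map_mul, map_inv₀, map_pow]
          rw [mul_inv_le_iff₀ hwx, one_mul]
          exact hn.le
        have := hmul x hxI _ this
        rwa [mul_comm, mul_assoc, inv_mul_cancel₀ hx0, mul_one] at this
      rcases Nat.eq_zero_or_pos n with hn0 | hn0
      · rw [hn0, pow_zero] at hyn
        exact h1 hyn
      · obtain ⟨m, rfl⟩ := Nat.exists_eq_add_of_lt hn0
        exact hpow y hy.le hyI m (by simpa [Nat.add_comm] using hyn)
  · rintro (rfl | rfl)
    · refine ⟨?_, rfl, ?_, ?_, ?_⟩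
      · rintro a rfl
        simp [Set.mem_setOf_eq]
      · rintro x rfl a _
        simp
      · simp
      · intro a b _ _ ha hb hab
        simp only [Set.mem_singleton_iff] at *
        rcases mul_eq_zero.1 hab with h | h
        exacts [ha h, hb h]
    · refine ⟨fun a (ha : w a < 1) => (le_of_lt ha : w a ≤ 1), ?_, ?_, ?_, ?_⟩
      · simp [Set.mem_setOf_eq]
      · intro x hx a ha
        simp only [Set.mem_setOf_eq, map_mul] at *
        calc w x * w a ≤ w x * 1 := by
              exact mul_le_mul_of_nonneg_left ha (AbsoluteValue.nonneg _ _)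
          _ = w x := mul_one _
          _ < 1 := hx
      · simp [Set.mem_setOf_eq]
      · intro a b ha hb haI hbI
        simp only [Set.mem_setOf_eq, not_lt, map_mul] at *
        have ha1 : w a = 1 := le_antisymm ha haI
        have hb1 : w b = 1 := le_antisymm hb hbI
        rw [ha1, hb1, mul_one]
end

section
/- Let R be a discrete valuation ring. Then every subset I ⊆ R with 0 ∈ I that is closed under multiplication by elements of R (x·r ∈ I for all x ∈ I, r ∈ R) is also closed under addition, and hence is an ideal of R. Consequently, the ideals of R coincide with the ideals of the underlying multiplicative monoid R•. -/
/-! Divisibility in a valuation ring is total, so of two elements `a`, `b` one divides the other,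
say `b = a * c`; then `a + b = a * (1 + c)` is a multiple of `a`. -/

namespace PreValuationRing

variable {R : Type*} [CommSemiring R] [PreValuationRing R]

theorem add_mem_of_mul_mem {I : Set R} (hmul : ∀ x ∈ I, ∀ r : R, x * r ∈ I) {a b : R}
    (ha : a ∈ I) (hb : b ∈ I) : a + b ∈ I := by
  obtain ⟨c, rfl⟩ | ⟨c, rfl⟩ := ValuationRing.dvd_total a b
  · simpa only [mul_add, mul_one] using hmul a ha (1 + c)
  · simpa only [mul_add, mul_one, add_comm] using hmul b hb (c + 1)

def idealOfMulMem (I : Set R) (h0 : (0 : R) ∈ I) (hmul : ∀ x ∈ I, ∀ r : R, x * r ∈ I) :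
    Ideal R where
  carrier := I
  zero_mem' := h0
  add_mem' := add_mem_of_mul_mem hmul
  smul_mem' r x hx := by simpa only [smul_eq_mul, mul_comm] using hmul x hx r

end PreValuationRing

/-- In a discrete valuation ring `R`, every ideal of the underlying
multiplicative monoid `R•` (a subset `I` with `0 ∈ I` and `I·R ⊆ I`) is
automatically closed under addition, and hence is an ideal of the ring `R`. -/
theorem monoid_ideal_of_dvr_is_ideal
    {R : Type*} [CommRing R] [IsDomain R] [IsDiscreteValuationRing R]
    (I : Set R) (h0 : (0 : R) ∈ I) (hmul : ∀ x ∈ I, ∀ r : R, x * r ∈ I) :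
    (∀ a ∈ I, ∀ b ∈ I, a + b ∈ I) ∧ ∃ J : Ideal R, (J : Set R) = I :=
  ⟨fun _ ha _ hb => PreValuationRing.add_mem_of_mul_mem hmul ha hb,
    PreValuationRing.idealOfMulMem I h0 hmul, rfl⟩
end

section
/- For each prime p let D_p ∈ ℤ[X] denote the Dickson polynomial of the first kind with parameter 1 (Polynomial.dickson 1 1 p), so that D_p(t + t⁻¹) = t^p + t^{-p}, and let F_p : ℤ[X] → ℤ[X] be the ring endomorphism f ↦ f.comp D_p of the Chebyshev line. Then the only polynomials f ∈ ℤ[X] satisfying F_p(f) = f^p for every prime p are f = 0 and f = 1. -/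
open Polynomial

lemma aux_empty (S : Finset ℂ)
    (hS : ∀ z ∈ S, ∀ w : ℂ, w ^ 2 = z + 2 → w ∈ S) : S = ∅ := by
  classical
  have hex : ∀ x : ℂ, ∃ w : ℂ, w ^ 2 = x + 2 := fun x =>
    IsAlgClosed.exists_pow_nat_eq (x + 2) (n := 2) (by norm_num)
  choose r hr using hex
  have hrinj : Function.Injective r := fun a b hab => by
    have : a + 2 = b + 2 := by rw [← hr a, ← hr b, hab]
    simpa using this
  have hninj : Function.Injective (fun z => -r z) := fun a b hab => by
    simp only [neg_inj] at hab; exact hrinj hab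
  set T₁ := S.image r with hT₁def
  set T₂ := S.image (fun z => -r z) with hT₂def
  have hT₁ : T₁ ⊆ S := by
    intro x hx
    obtain ⟨z, hz, rfl⟩ := Finset.mem_image.mp hx
    exact hS z hz _ (hr z)
  have hT₂ : T₂ ⊆ S := by
    intro x hx
    obtain ⟨z, hz, rfl⟩ := Finset.mem_image.mp hx
    exact hS z hz _ (by rw [neg_pow]; simp [hr z])
  have hcard₁ : T₁.card = S.card := Finset.card_image_of_injective _ hrinj
  have hcard₂ : T₂.card = S.card := Finset.card_image_of_injective _ hninj
  have hinter : T₁ ∩ T₂ ⊆ {0} := by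
    intro x hx
    obtain ⟨hx₁, hx₂⟩ := Finset.mem_inter.mp hx
    obtain ⟨z, hz, rfl⟩ := Finset.mem_image.mp hx₁
    obtain ⟨z', hz', he⟩ := Finset.mem_image.mp hx₂
    have hzz : z' = z := by
      have : z' + 2 = z + 2 := by
        rw [← hr z, ← hr z', ← he]; ring
      simpa using this
    subst hzz
    have : r z' = 0 := by
      have : r z' = -r z' := he.symm
      linear_combination this / 2
    simp [this]
  have key : S.card ≤ 1 := by
    have h1 : T₁ ∪ T₂ ⊆ S := Finset.union_subset hT₁ hT₂
    have h2 := Finset.card_union_add_card_inter T₁ T₂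
    have h3 : (T₁ ∩ T₂).card ≤ 1 := le_trans (Finset.card_le_card hinter) (by simp)
    have h4 : (T₁ ∪ T₂).card ≤ S.card := Finset.card_le_card h1
    omega
  rcases Finset.eq_empty_or_nonempty S with h | h
  · exact h
  · exfalso
    obtain ⟨z, hz⟩ := h
    have hcard : S.card = 1 := le_antisymm key (Finset.one_le_card.mpr ⟨z, hz⟩)
    obtain ⟨a, ha⟩ := Finset.card_eq_one.mp hcard
    subst ha
    simp only [Finset.mem_singleton] at hz
    subst hz
    have h1 : r z = z := Finset.mem_singleton.mp (hS z (Finset.mem_singleton_self z) _ (hr z))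
    have h2 : -r z = z := Finset.mem_singleton.mp
      (hS z (Finset.mem_singleton_self z) _ (by rw [neg_pow]; simp [hr z]))
    have hz0 : z = 0 := by rw [h1] at h2; linear_combination -h2/2
    have := hr z
    rw [h1, hz0] at this
    norm_num at this


/-- The Chebychev line: let `F_p : ℤ[X] → ℤ[X]` be the Frobenius lift
`f ↦ f ∘ D_p`, where `D_p = dickson 1 1 p` is the Dickson polynomial with
`D_p(t + t⁻¹) = t^p + t^{-p}`.  The only polynomials `f ∈ ℤ[X]` satisfying
`F_p(f) = f^p` for every prime `p` are `f = 0` and `f = 1`. -/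
theorem chebychev_line_frobenius_fixed_points (f : Polynomial ℤ) :
    (∀ p : ℕ, p.Prime → f.comp (Polynomial.dickson 1 1 p) = f ^ p) ↔
      (f = 0 ∨ f = 1) := by
  constructor
  · intro h
    have h2 := h 2 Nat.prime_two
    rw [dickson_two] at h2
    have h2' : f.comp (X ^ 2 - 2) = f ^ 2 := by
      convert h2 using 3
      norm_num
    by_cases hd : f.natDegree = 0
    · obtain ⟨c, rfl⟩ := natDegree_eq_zero.mp hd
      rw [C_comp, ← C_pow] at h2'
      have hc : c = c ^ 2 := C_injective h2'
      have hcc : c * (c - 1) = 0 := by linear_combination -hc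
      rcases mul_eq_zero.mp hcc with h | h
      · left; simp [h]
      · right
        have h1 : c = 1 := by linarith
        rw [h1, map_one]
    · exfalso
      have hf0 : f ≠ 0 := fun h0 => hd (by simp [h0])
      set F := f.map (Int.castRingHom ℂ) with hF
      have hF0 : F ≠ 0 := (Polynomial.map_ne_zero_iff (by exact Int.cast_injective)).mpr hf0
      have hFeval : ∀ w : ℂ, F.eval (w ^ 2 - 2) = (F.eval w) ^ 2 := by
        intro w
        have := congrArg (fun q => (q.map (Int.castRingHom ℂ)).eval w) h2'
        simpa [Polynomial.map_comp, eval_comp] using this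
      set S := F.roots.toFinset with hSdef
      have hmem : ∀ z, z ∈ S ↔ F.eval z = 0 := by
        intro z; simp [hSdef, Polynomial.mem_roots, hF0, IsRoot]
      have hclosed : ∀ z ∈ S, ∀ w : ℂ, w ^ 2 = z + 2 → w ∈ S := by
        intro z hz w hw
        rw [hmem] at hz ⊢
        have h3 : F.eval (w ^ 2 - 2) = (F.eval w) ^ 2 := hFeval w
        rw [hw] at h3
        simp only [add_sub_cancel_right, hz] at h3
        exact pow_eq_zero_iff (by norm_num) |>.mp h3.symm
      have hSempty := aux_empty S hclosed
      have hdeg : 0 < F.degree := by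
        rw [hF, Polynomial.degree_map_eq_of_injective (by exact Int.cast_injective)]
        exact natDegree_pos_iff_degree_pos.mp (Nat.pos_of_ne_zero hd)
      obtain ⟨z, hz⟩ := Complex.exists_root hdeg
      have : z ∈ S := (hmem z).mpr hz
      rw [hSempty] at this
      simp at this
  · rintro (rfl | rfl) p hp
    · simp [zero_pow hp.ne_zero]
    · simp
end

section
/- Let A be a commutative monoid and p a prime number. Let F_p : ℤ[A] → ℤ[A] be the ring endomorphism of the monoid algebra ℤ[A] induced by the monoid endomorphism a ↦ a^p (extending linearly on the canonical basis). Then F_p is a Frobenius lift: for every x ∈ ℤ[A], the image of F_p(x) under the coefficient reduction map ℤ[A] → (ℤ/pℤ)[A] equals the p-th power of the image of x. (This is the Λ-structure underlying the fact that every toric variety is a Λ-scheme.) -/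
/-- The reduction map `ℤ[A] → (ℤ/pℤ)[A]` induced on coefficients by the ring
homomorphism `ℤ → ℤ/pℤ`. -/
noncomputable def reduceCoeffs (p : ℕ) {A : Type*} (x : MonoidAlgebra ℤ A) :
    MonoidAlgebra (ZMod p) A :=
  MonoidAlgebra.ofCoeff (Finsupp.mapRange (fun z : ℤ => (z : ZMod p)) (by simp) x.coeff)

/-!
Reduction mod `p` commutes with `F_p`, so it suffices to show that on `(ℤ/pℤ)[A]` the
Frobenius `y ↦ y ^ p` is `F_p`. Both are ring endomorphisms (the former because `(ℤ/pℤ)[A]` has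
characteristic `p`), and they agree on monomials: `(c • a) ^ p = c ^ p • a ^ p = c • a ^ p`
by Fermat's little theorem.
-/

open scoped MonoidAlgebra

namespace MonoidAlgebra

instance charP {R M : Type*} [Semiring R] [MulOneClass M] (p : ℕ) [CharP R p] :
    CharP R[M] p :=
  charP_of_injective_ringHom (f := singleOneRingHom) single_right_injective p

theorem frobenius_eq_mapDomainRingHom_comp_mapRingHom {R M : Type*} [CommSemiring R]
    [CommMonoid M] (p : ℕ) [Fact p.Prime] [CharP R p] :
    frobenius R[M] p =
      (mapDomainRingHom R (powMonoidHom p)).comp (mapRingHom M (frobenius R p)) :=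
  ringHom_ext (fun _ => by simp [frobenius_def]) (fun _ => by simp [frobenius_def])

theorem frobenius_zmod {M : Type*} [CommMonoid M] (p : ℕ) [Fact p.Prime] :
    frobenius (ZMod p)[M] p = mapDomainRingHom (ZMod p) (powMonoidHom p) := by
  rw [frobenius_eq_mapDomainRingHom_comp_mapRingHom, ZMod.frobenius_zmod, mapRingHom_id,
    RingHom.comp_id]

end MonoidAlgebra

open MonoidAlgebra

theorem reduceCoeffs_eq_mapRingHom (p : ℕ) {A : Type*} [Monoid A] :
    reduceCoeffs p (A := A) = mapRingHom A (Int.castRingHom (ZMod p)) := by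
  funext x
  ext a
  simp [reduceCoeffs]

/-- The Λ-structure on a monoid algebra (underlying the Λ-structure of toric
varieties): for a commutative monoid `A` and a prime `p`, the ring
endomorphism `F_p` of `ℤ[A]` induced by `a ↦ a^p` is a Frobenius lift, i.e.
reducing `F_p x` modulo `p` yields the `p`-th power of the reduction of `x`
in `(ℤ/pℤ)[A]`. -/
theorem monoidAlgebra_frobenius_lift
    {A : Type*} [CommMonoid A] (p : ℕ) (hp : p.Prime) (x : MonoidAlgebra ℤ A) :
    reduceCoeffs p (MonoidAlgebra.mapDomainRingHom ℤ (powMonoidHom p) x)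
      = (reduceCoeffs p x) ^ p := by
  have : Fact p.Prime := ⟨hp⟩
  rw [reduceCoeffs_eq_mapRingHom, ← frobenius_def, frobenius_zmod, ← RingHom.comp_apply,
    mapRingHom_comp_mapDomainRingHom, RingHom.comp_apply]
end

section
/- Let n ≥ 1. In the polynomial ring ℤ[X], the ideal generated by X^n − 1 together with the polynomials ∑_{i=0}^{n/d − 1} X^{d·i} for all proper divisors d of n (divisors d of n with d ≠ n) equals the principal ideal generated by the n-th cyclotomic polynomial Φ_n. Consequently, the associated ring of the cyclotomic field extension F_{1ⁿ} of F₁ is ℤ[X]/(Φ_n) ≅ ℤ[ζ_n], the ring of integers of ℚ(ζ_n). -/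
/-!
For a proper divisor `d` of `n`, `∑_{i < n/d} X^(d i) = (X^n - 1)/(X^d - 1) = Φ_n · q_d` with
`q_d = ∏ Φ_e` over the proper divisors `e` of `n` that do not divide `d`. So it suffices that the
`q_d` generate the unit ideal. Otherwise they all vanish at some `α` in a field `ℤ[X] ⧸ M`. But the
`e` with `Φ_e(α) = 0` form a chain under divisibility, since they differ only by powers of the
characteristic, and `q_d` does not vanish at `α` when `d` is the largest of them.
-/

open Polynomial

theorem isPrimitiveRoot_ordCompl_of_isRoot_cyclotomic {K : Type*} [CommRing K] [IsDomain K]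
    {p : ℕ} [hp : Fact p.Prime] [CharP K p] {e : ℕ} (he : e ≠ 0) {α : K}
    (h : (cyclotomic e K).IsRoot α) : IsPrimitiveRoot α (ordCompl[p] e) := by
  have : NeZero ((ordCompl[p] e : ℕ) : K) :=
    ⟨fun h0 => Nat.not_dvd_ordCompl hp.out he ((CharP.cast_eq_zero_iff K p _).mp h0)⟩
  rw [← Nat.ordProj_mul_ordCompl_eq_self e p] at h
  exact isRoot_cyclotomic_prime_pow_mul_iff_of_charP.mp h

theorem dvd_or_dvd_of_isRoot_cyclotomic {K : Type*} [CommRing K] [IsDomain K] {e f : ℕ}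
    (he : e ≠ 0) (hf : f ≠ 0) {α : K} (hαe : (cyclotomic e K).IsRoot α)
    (hαf : (cyclotomic f K).IsRoot α) : e ∣ f ∨ f ∣ e := by
  obtain ⟨p, hchar⟩ := CharP.exists K
  rcases CharP.char_is_prime_or_zero K p with hp | rfl
  · have : Fact p.Prime := ⟨hp⟩
    have hm : ordCompl[p] e = ordCompl[p] f :=
      (isPrimitiveRoot_ordCompl_of_isRoot_cyclotomic he hαe).unique
        (isPrimitiveRoot_ordCompl_of_isRoot_cyclotomic hf hαf)
    rw [← Nat.ordProj_mul_ordCompl_eq_self e p, ← Nat.ordProj_mul_ordCompl_eq_self f p, hm]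
    rcases le_total (e.factorization p) (f.factorization p) with h | h
    · exact Or.inl (mul_dvd_mul_right (pow_dvd_pow p h) _)
    · exact Or.inr (mul_dvd_mul_right (pow_dvd_pow p h) _)
  · have := CharP.charP_to_charZero K
    have : NeZero (e : K) := ⟨Nat.cast_ne_zero.mpr he⟩
    have : NeZero (f : K) := ⟨Nat.cast_ne_zero.mpr hf⟩
    exact Or.inl ((isRoot_cyclotomic_iff.mp hαe).unique (isRoot_cyclotomic_iff.mp hαf)).dvd

theorem exists_eval_prod_cyclotomic_sdiff_divisors_ne_zero {K : Type*} [CommRing K] [IsDomain K]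
    {n : ℕ} (hn : 1 < n) (α : K) :
    ∃ d ∈ n.properDivisors, (∏ e ∈ n.properDivisors \ d.divisors, cyclotomic e K).eval α ≠ 0 := by
  classical
  by_contra! h
  simp only [eval_prod, Finset.prod_eq_zero_iff] at h
  have hroot : ∀ d ∈ n.properDivisors,
      ∃ e ∈ n.properDivisors, ¬ e ∣ d ∧ (cyclotomic e K).IsRoot α := by
    intro d hd
    obtain ⟨e, he, hroot⟩ := h d hd
    rw [Finset.mem_sdiff, Nat.mem_divisors] at he
    exact ⟨e, he.1, fun hed => he.2 ⟨hed, (Nat.pos_of_mem_properDivisors hd).ne'⟩, hroot⟩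
  set S := n.properDivisors.filter fun e => (cyclotomic e K).IsRoot α
  have hS : S.Nonempty := by
    obtain ⟨e, he, -, hroot⟩ := hroot 1 (Nat.one_mem_properDivisors_iff_one_lt.mpr hn)
    exact ⟨e, Finset.mem_filter.mpr ⟨he, hroot⟩⟩
  obtain ⟨hd, hdroot⟩ := Finset.mem_filter.mp (S.max'_mem hS)
  obtain ⟨e, he, hed, heroot⟩ := hroot _ hd
  have hle : e ≤ S.max' hS := S.le_max' e (Finset.mem_filter.mpr ⟨he, heroot⟩)
  rcases dvd_or_dvd_of_isRoot_cyclotomic (Nat.pos_of_mem_properDivisors he).ne'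
    (Nat.pos_of_mem_properDivisors hd).ne' heroot hdroot with h | h
  · exact hed h
  · exact hed ((Nat.le_of_dvd (Nat.pos_of_mem_properDivisors he) h).antisymm hle ▸ dvd_rfl)

theorem span_prod_cyclotomic_sdiff_divisors_eq_top (R : Type*) [CommRing R] {n : ℕ}
    (hn : 1 < n) :
    Ideal.span ((fun d : ℕ => ∏ e ∈ n.properDivisors \ d.divisors, cyclotomic e R) ''
      n.properDivisors) = ⊤ := by
  by_contra hne
  obtain ⟨M, hM, hle⟩ := Ideal.exists_le_maximal _ hne
  have := hM.isPrime
  obtain ⟨d, hd, hne0⟩ :=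
    exists_eval_prod_cyclotomic_sdiff_divisors_ne_zero hn (Ideal.Quotient.mk M X)
  have hmk : ∀ q : R[X], Ideal.Quotient.mk M q = (q.map ((Ideal.Quotient.mk M).comp C)).eval
      (Ideal.Quotient.mk M X) := fun q => by
    rw [eval_map, ← hom_eval₂, eval₂_C_X]
  have hmem := Ideal.Quotient.eq_zero_iff_mem.mpr (hle (Ideal.subset_span ⟨d, hd, rfl⟩))
  rw [hmk, Polynomial.map_prod] at hmem
  simp only [map_cyclotomic] at hmem
  exact hne0 hmem

theorem geom_sum_X_pow_eq_prod_cyclotomic (R : Type*) [CommRing R] {d n : ℕ} (hdvd : d ∣ n)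
    (hn : n ≠ 0) :
    ∑ i ∈ Finset.range (n / d), (X : R[X]) ^ (d * i) =
      ∏ e ∈ n.divisors \ d.divisors, cyclotomic e R := by
  have hd : d ≠ 0 := (Nat.pos_of_dvd_of_pos hdvd (Nat.pos_of_ne_zero hn)).ne'
  apply (monic_X_pow_sub_C (1 : R) hd).isRegular.left
  simp only [C_1, pow_mul]
  rw [mul_geom_sum, ← pow_mul, Nat.mul_div_cancel' hdvd,
    X_pow_sub_one_mul_prod_cyclotomic_eq_X_pow_sub_one_of_dvd R hdvd hn]

theorem prod_cyclotomic_sdiff_divisors_eq_cyclotomic_mul (R : Type*) [CommRing R] {d n : ℕ}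
    (hd : d ∈ n.properDivisors) :
    ∏ e ∈ n.divisors \ d.divisors, cyclotomic e R =
      cyclotomic n R * ∏ e ∈ n.properDivisors \ d.divisors, cyclotomic e R := by
  obtain ⟨-, hdn⟩ := Nat.mem_properDivisors.mp hd
  have hnd : n ∉ d.divisors := fun h => (Nat.divisor_le h).not_gt hdn
  rw [← Nat.insert_self_properDivisors (by omega), Finset.insert_sdiff_of_notMem _ hnd,
    Finset.prod_insert fun h => Nat.self_notMem_properDivisors (Finset.mem_sdiff.mp h).1]

/-- The associated ring of the cyclotomic field extension `F_{1^n}` of `F₁`: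
in `ℤ[X]`, the ideal generated by `X^n - 1` together with the polynomials
`∑_{i=0}^{n/d - 1} X^(d·i)` for all proper divisors `d` of `n` equals the
principal ideal generated by the `n`-th cyclotomic polynomial `Φ_n`.
Hence the associated ring of `F_{1^n}` is `ℤ[X]/(Φ_n) ≅ ℤ[ζ_n]`. -/
theorem cyclotomic_ideal_presentation (n : ℕ) (hn : 1 ≤ n) :
    Ideal.span ({X ^ n - 1} ∪
        ⋃ d ∈ Nat.properDivisors n,
          {∑ i ∈ Finset.range (n / d), (X : Polynomial ℤ) ^ (d * i)})
      = Ideal.span {Polynomial.cyclotomic n ℤ} := by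
  obtain rfl | hn := hn.eq_or_lt
  · simp
  have hsum : ∀ d ∈ n.properDivisors, ∑ i ∈ Finset.range (n / d), (X : ℤ[X]) ^ (d * i) =
      cyclotomic n ℤ * ∏ e ∈ n.properDivisors \ d.divisors, cyclotomic e ℤ := fun d hd => by
    rw [geom_sum_X_pow_eq_prod_cyclotomic ℤ (Nat.mem_properDivisors.mp hd).1 (by omega),
      prod_cyclotomic_sdiff_divisors_eq_cyclotomic_mul ℤ hd]
  apply le_antisymm
  · simp only [Ideal.span_le, Set.union_subset_iff, Set.iUnion₂_subset_iff,
      Set.singleton_subset_iff, SetLike.mem_coe, Ideal.mem_span_singleton]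
    exact ⟨cyclotomic.dvd_X_pow_sub_one n ℤ, fun d hd => (hsum d hd).symm ▸ dvd_mul_right _ _⟩
  · calc Ideal.span {cyclotomic n ℤ}
        = Ideal.span {cyclotomic n ℤ} * Ideal.span ((fun d : ℕ =>
            ∏ e ∈ n.properDivisors \ d.divisors, cyclotomic e ℤ) '' n.properDivisors) := by
          rw [span_prod_cyclotomic_sdiff_divisors_eq_top ℤ hn, Ideal.mul_top]
      _ ≤ _ := by
        rw [Ideal.span_mul_span', Set.singleton_mul, Set.image_image]
        refine Ideal.span_mono (Set.subset_union_of_subset_right ?_ _)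
        rintro _ ⟨d, hd, rfl⟩
        exact Set.mem_biUnion hd (hsum d hd).symm
end

section
/- Call a square real matrix A totally non-negative if every minor of A is non-negative, i.e. for every k and every pair of strictly increasing index maps I, J : Fin k → Fin n, det(A.submatrix I J) ≥ 0. If A and B are totally non-negative n×n real matrices, then so is their product A·B. In particular, the totally non-negative matrices of determinant 1 form a multiplicative semigroup (the ℝ_{≥0}-points of the Tits–Weyl model SL_{n,F₁}). -/
open Matrix Finset Equiv

namespace CBAux

variable {n k : ℕ}

lemma det_mul_eq_sum (M : Matrix (Fin k) (Fin n) ℝ) (N : Matrix (Fin n) (Fin k) ℝ) :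
    det (M * N) = ∑ p : Fin k → Fin n, det (M.submatrix id p) * ∏ i, N (p i) i := by
  simp only [det_apply', mul_apply, Finset.prod_univ_sum, Finset.mul_sum,
    Fintype.piFinset_univ, submatrix_apply, id_eq]
  rw [Finset.sum_comm]
  refine Finset.sum_congr rfl fun p _ => ?_
  rw [Finset.sum_mul]
  refine Finset.sum_congr rfl fun σ _ => ?_
  rw [mul_assoc, ← Finset.prod_mul_distrib]

lemma det_submatrix_zero_of_not_injective (M : Matrix (Fin k) (Fin n) ℝ)
    {p : Fin k → Fin n} (hp : ¬ Function.Injective p) :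
    det (M.submatrix id p) = 0 := by
  rw [Function.not_injective_iff] at hp
  obtain ⟨i, j, hpij, hij⟩ := hp
  exact det_zero_of_column_eq hij fun x => by simp [hpij]

/-- The equivalence between pairs (strictly monotone map, permutation) and
injective maps `Fin k → Fin n`. -/
noncomputable def factorEquiv (n k : ℕ) :
    ({q : Fin k → Fin n // StrictMono q} × Equiv.Perm (Fin k)) ≃
      {p : Fin k → Fin n // Function.Injective p} :=
  Equiv.ofBijective
    (fun x => ⟨x.1.1 ∘ x.2, x.1.2.injective.comp x.2.injective⟩)
    (by
      constructor
      · rintro ⟨⟨q, hq⟩, π⟩ ⟨⟨q', hq'⟩, π'⟩ h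
        simp only [Subtype.mk.injEq] at h
        have hr : Set.range q = Set.range q' := by
          rw [← π.surjective.range_comp q, ← π'.surjective.range_comp q']
          exact congrArg Set.range h
        haveI : WellFoundedLT (Fin k) := inferInstance
        have hqq : q = q' := (hq.range_inj hq').1 hr
        subst hqq
        have hpp : π = π' := Equiv.ext fun i => hq.injective (congrFun h i)
        simp [hpp]
      · rintro ⟨p, hp⟩
        refine ⟨⟨⟨p ∘ Tuple.sort p, ?_⟩, (Tuple.sort p)⁻¹⟩, ?_⟩
        · exact (Tuple.monotone_sort p).strictMono_of_injective
            (hp.comp (Tuple.sort p).injective)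
        · ext i
          simp)

lemma cauchyBinet (M : Matrix (Fin k) (Fin n) ℝ) (N : Matrix (Fin n) (Fin k) ℝ) :
    det (M * N) = ∑ q : {q : Fin k → Fin n // StrictMono q},
      det (M.submatrix id q.1) * det (N.submatrix q.1 id) := by
  rw [det_mul_eq_sum]
  have step1 : ∑ p : Fin k → Fin n, det (M.submatrix id p) * ∏ i, N (p i) i
      = ∑ p : {p : Fin k → Fin n // Function.Injective p},
          det (M.submatrix id p.1) * ∏ i, N (p.1 i) i := by
    rw [← Finset.sum_subtype (Finset.univ.filter (fun p => Function.Injective p))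
      (fun p => by simp) (fun p => det (M.submatrix id p) * ∏ i, N (p i) i)]
    refine (Finset.sum_subset (Finset.filter_subset _ _) fun p _ hp => ?_).symm
    rw [det_submatrix_zero_of_not_injective M (by simpa using hp), zero_mul]
  rw [step1, ← Equiv.sum_comp (factorEquiv n k)
    (fun p => det (M.submatrix id p.1) * ∏ i, N (p.1 i) i)]
  rw [Fintype.sum_prod_type]
  refine Finset.sum_congr rfl fun q _ => ?_
  rw [det_apply' (N.submatrix q.1 id), Finset.mul_sum]
  refine Finset.sum_congr rfl fun π _ => ?_
  show det (M.submatrix id (q.1 ∘ π)) * ∏ i, N (q.1 (π i)) i = _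
  have : M.submatrix id (q.1 ∘ π) = (M.submatrix id q.1).submatrix id π := by
    simp [Matrix.submatrix_submatrix]
  rw [this, det_permute']
  simp [submatrix_apply, mul_comm, mul_assoc, mul_left_comm]

end CBAux

open Matrix

/-- A square real matrix is totally non-negative if all of its minors
`Δ_{I,J}(A) = det (A.submatrix I J)`, for strictly increasing index maps
`I J : Fin k → Fin n`, are non-negative. -/
def TotallyNonneg {n : ℕ} (A : Matrix (Fin n) (Fin n) ℝ) : Prop :=
  ∀ (k : ℕ) (I J : Fin k → Fin n), StrictMono I → StrictMono J →
    0 ≤ (A.submatrix I J).det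

/-- The product of two totally non-negative matrices is totally non-negative.
In particular, the totally non-negative matrices of determinant `1` form a
multiplicative semigroup: the `ℝ_{≥0}`-points `SL_{n,F₁}(ℝ_{≥0})` of the
Tits–Weyl model of `SL_n`. -/
theorem TotallyNonneg.mul {n : ℕ} {A B : Matrix (Fin n) (Fin n) ℝ}
    (hA : TotallyNonneg A) (hB : TotallyNonneg B) :
    TotallyNonneg (A * B) := by
  intro k I J hI hJ
  have hsub : (A * B).submatrix I J = (A.submatrix I id) * (B.submatrix id J) := by
    ext i j
    simp [Matrix.mul_apply]
  rw [hsub, CBAux.cauchyBinet]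
  refine Finset.sum_nonneg fun q _ => mul_nonneg ?_ ?_
  · have h := hA k I q.1 hI q.2
    simpa [Matrix.submatrix_submatrix, Function.id_comp, Function.comp_id] using h
  · have h := hB k q.1 J q.2 hJ
    simpa [Matrix.submatrix_submatrix, Function.id_comp, Function.comp_id] using h
end
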